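/- Let n ≥ 2 and let p₀, q₀ ∈ ℂ[x₁,…,xₙ] be polynomials with q₀ ≠ 0 and such that p₀ is not a constant multiple of q₀ (equivalently, the rational function p₀/q₀ is non-constant). Then there exist polynomials p, q ∈ ℂ[x₁,…,xₙ] with q ≠ 0 and p·q₀ = q·p₀ (so that p/q = p₀/q₀ as rational functions), and a point x ∈ ℂⁿ at which the differentials dq(x) and dp(x) are ℂ-linearly independent; equivalently, for the polynomial map g = (q, p) : ℂⁿ → ℂ², the set S := {x ∈ ℂⁿ : rank of the derivative dg(x) is < 2} is a proper subset of ℂⁿ. -/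

import Mathlib

/-!
If every `Wᵢ := p₀ ∂ᵢq₀ - ∂ᵢp₀ q₀` vanished, the restrictions of `p₀` and `q₀` to any line would
have zero Wronskian, hence be proportional, and `p₀ / q₀` would be constant. So some `Wᵢ ≠ 0`.
Multiplying both polynomials by `t = xⱼ + c` with `j ≠ i`, the `(i, j)` Jacobian minor of
`(t q₀, t p₀)` becomes `t (t J + Wᵢ)`, where `J` is the minor of `(q₀, p₀)`; for `c = 0` or
`c = 1` this polynomial is nonzero, so it is nonzero at some point, where the two differentials
are then independent.
-/

namespace Polynomial

variable {K : Type*} [Field K] [CharZero K]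

theorem exists_eq_C_mul_of_wronskian_eq_zero {P Q : K[X]} (hQ : Q ≠ 0)
    (h : wronskian P Q = 0) : ∃ c : K, P = C c * Q := by
  classical
  set d := gcd P Q
  have hd : d ≠ 0 := gcd_ne_zero_of_right hQ
  set A := P / d
  set B := Q / d
  have hP : P = d * A := (EuclideanDomain.mul_div_cancel' hd (gcd_dvd_left P Q)).symm
  have hQ' : Q = d * B := (EuclideanDomain.mul_div_cancel' hd (gcd_dvd_right P Q)).symm
  have hAB : wronskian A B = 0 := by
    have : d * d * wronskian A B = 0 := by
      rw [← h, hP, hQ']; simp only [wronskian, derivative_mul]; ring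
    simpa [hd] using this
  obtain ⟨hA, hB⟩ : derivative A = 0 ∧ derivative B = 0 :=
    (isCoprime_div_gcd_div_gcd hQ).wronskian_eq_zero_iff.mp hAB
  rw [eq_C_of_derivative_eq_zero hA] at hP
  rw [eq_C_of_derivative_eq_zero hB] at hQ'
  have hb : B.coeff 0 ≠ 0 := fun hb => hQ (by rw [hQ', hb, map_zero, mul_zero])
  refine ⟨A.coeff 0 / B.coeff 0, ?_⟩
  rw [hP, hQ', mul_left_comm, ← map_mul, div_mul_cancel₀ _ hb]

theorem eval_mul_eval_eq_of_wronskian_eq_zero {P Q : K[X]} (h : wronskian P Q = 0) (s t : K) :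
    P.eval s * Q.eval t = P.eval t * Q.eval s := by
  rcases eq_or_ne Q 0 with rfl | hQ
  · simp
  · obtain ⟨c, rfl⟩ := exists_eq_C_mul_of_wronskian_eq_zero hQ h
    simp only [eval_mul, eval_C]
    ring

end Polynomial

theorem LinearIndependent.pair_of_mul_sub_mul_ne_zero {R ι : Type*} [CommRing R] [IsDomain R]
    {u v : ι → R} {i j : ι} (h : u i * v j - u j * v i ≠ 0) : LinearIndependent R ![u, v] := by
  rw [LinearIndependent.pair_iff]
  intro a b hab
  have hi := congrFun hab i
  have hj := congrFun hab j
  simp only [Pi.add_apply, Pi.smul_apply, smul_eq_mul, Pi.zero_apply] at hi hj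
  constructor
  · refine (mul_eq_zero.mp (?_ : a * (u i * v j - u j * v i) = 0)).resolve_right h
    linear_combination v j * hi - v i * hj
  · refine (mul_eq_zero.mp (?_ : b * (u i * v j - u j * v i) = 0)).resolve_right h
    linear_combination u i * hj - u j * hi

namespace MvPolynomial

theorem exists_eval_ne_zero {R σ : Type*} [CommRing R] [IsDomain R] [Infinite R]
    {p : MvPolynomial σ R} (hp : p ≠ 0) : ∃ x, eval x p ≠ 0 := by
  contrapose! hp
  exact funext (by simpa using hp)

section

open Polynomial

theorem derivative_aeval {R σ : Type*} [CommSemiring R] [Fintype σ] (f : σ → R[X])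
    (p : MvPolynomial σ R) :
    derivative (aeval f p) = ∑ i, aeval f (pderiv i p) * derivative (f i) := by
  classical
  induction p using MvPolynomial.induction_on with
  | C a => simp
  | add p q hp hq => simp only [map_add, hp, hq, add_mul, Finset.sum_add_distrib]
  | mul_X p j hp =>
    simp only [map_mul, aeval_X, derivative_mul, hp, Derivation.leibniz, pderiv_X, smul_eq_mul,
      map_add, Finset.sum_mul, add_mul, Finset.sum_add_distrib, Pi.single_apply]
    simp [add_comm, mul_comm (f j), mul_right_comm _ (f j)]

variable {K σ : Type*} [Field K] [CharZero K] [Fintype σ]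

theorem eval_mul_eval_eq_of_forall_mul_pderiv_eq {p q : MvPolynomial σ K}
    (h : ∀ i, p * pderiv i q = pderiv i p * q) (x y : σ → K) :
    eval x p * eval y q = eval y p * eval x q := by
  set f : σ → K[X] := fun i => Polynomial.C (x i) + Polynomial.C (y i - x i) * Polynomial.X
  have eval_line : ∀ (t : K) (r : MvPolynomial σ K),
      (aeval f r).eval t = eval (fun i => (f i).eval t) r := fun t r => by
    rw [← Polynomial.coe_aeval_eq_eval, comp_aeval_apply, ← coe_aeval_eq_eval]
    rfl
  have hw : wronskian (aeval f p) (aeval f q) = 0 := by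
    rw [wronskian, derivative_aeval, derivative_aeval, Finset.mul_sum, Finset.sum_mul,
      ← Finset.sum_sub_distrib]
    refine Finset.sum_eq_zero fun i _ => ?_
    have hi := congrArg (aeval f) (h i)
    rw [map_mul, map_mul] at hi
    linear_combination derivative (f i) * hi
  have := eval_mul_eval_eq_of_wronskian_eq_zero hw 0 1
  simp only [eval_line] at this
  simpa [f] using this

theorem exists_eq_smul_of_forall_mul_pderiv_eq {p q : MvPolynomial σ K} (hq : q ≠ 0)
    (h : ∀ i, p * pderiv i q = pderiv i p * q) : ∃ c : K, p = c • q := by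
  obtain ⟨x, hx⟩ := exists_eval_ne_zero hq
  refine ⟨eval x p / eval x q, funext fun y => ?_⟩
  rw [smul_eval, div_mul_eq_mul_div, eq_div_iff hx, eval_mul_eval_eq_of_forall_mul_pderiv_eq h]

end

section Jacobian

variable {R σ : Type*} [CommRing R]

noncomputable def jacobianMinor (i j : σ) (q p : MvPolynomial σ R) : MvPolynomial σ R :=
  pderiv i q * pderiv j p - pderiv j q * pderiv i p

theorem jacobianMinor_mul_mul {i j : σ} {t : MvPolynomial σ R} (hi : pderiv i t = 0)
    (hj : pderiv j t = 1) (q p : MvPolynomial σ R) :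
    jacobianMinor i j (t * q) (t * p) =
      t * (t * jacobianMinor i j q p + (p * pderiv i q - pderiv i p * q)) := by
  simp only [jacobianMinor, Derivation.leibniz, hi, hj, smul_eq_mul]
  ring

theorem exists_X_add_C_mul_add_ne_zero (j : σ) (J : MvPolynomial σ R) {W : MvPolynomial σ R}
    (hW : W ≠ 0) : ∃ c : R, (X j + C c) * J + W ≠ 0 := by
  by_contra! h
  have h0 := h 0
  have h1 := h 1
  simp only [map_zero, map_one, add_zero] at h0 h1
  have hJ : J = 0 := by linear_combination h1 - h0
  exact hW (by simpa [hJ] using h0)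

theorem linearIndependent_eval_pderiv_of_eval_jacobianMinor_ne_zero [IsDomain R] {i j : σ}
    {q p : MvPolynomial σ R} {x : σ → R}
    (h : eval x (jacobianMinor i j q p) ≠ 0) :
    LinearIndependent R ![fun k => eval x (pderiv k q), fun k => eval x (pderiv k p)] :=
  LinearIndependent.pair_of_mul_sub_mul_ne_zero (i := i) (j := j) (by
    simpa only [jacobianMinor, map_sub, map_mul] using h)

end Jacobian

end MvPolynomial

open MvPolynomial

/-- Let `n ≥ 2` and let `p₀, q₀ ∈ ℂ[x₁,…,xₙ]` with `q₀ ≠ 0` and `p₀` not a constant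
multiple of `q₀` (i.e. the rational function `p₀/q₀` is non-constant).  Then there exist
polynomials `p, q` with `q ≠ 0` and `p·q₀ = q·p₀` (so `p/q = p₀/q₀` as rational functions)
and a point `x ∈ ℂⁿ` at which the differentials `dq(x)` and `dp(x)` (identified with the
gradient vectors) are `ℂ`-linearly independent; equivalently, the map `g = (q, p) : ℂⁿ → ℂ²`
has derivative of rank `2` at `x`, so `S = {x | rank dg(x) < 2}` is a proper subset of `ℂⁿ`. -/
theorem exists_representative_with_independent_differentials
    {n : ℕ} (hn : 2 ≤ n) (p₀ q₀ : MvPolynomial (Fin n) ℂ)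
    (hq₀ : q₀ ≠ 0) (hnc : ¬ ∃ c : ℂ, p₀ = c • q₀) :
    ∃ p q : MvPolynomial (Fin n) ℂ, q ≠ 0 ∧ p * q₀ = q * p₀ ∧
      ∃ x : Fin n → ℂ,
        LinearIndependent ℂ
          ![fun i => eval x (pderiv i q), fun i => eval x (pderiv i p)] := by
  obtain ⟨i, hW⟩ : ∃ i, p₀ * pderiv i q₀ - pderiv i p₀ * q₀ ≠ 0 := by
    by_contra! h
    exact hnc (exists_eq_smul_of_forall_mul_pderiv_eq hq₀ fun i => sub_eq_zero.mp (h i))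
  have : Nontrivial (Fin n) := Fin.nontrivial_iff_two_le.mpr hn
  obtain ⟨j, hji⟩ := exists_ne i
  obtain ⟨c, hc⟩ := exists_X_add_C_mul_add_ne_zero j (jacobianMinor i j q₀ p₀) hW
  set t : MvPolynomial (Fin n) ℂ := X j + C c
  have hti : pderiv i t = 0 := by simp [t, pderiv_X, hji]
  have htj : pderiv j t = 1 := by simp [t]
  have ht : t ≠ 0 := fun h => by simp [h] at htj
  obtain ⟨x, hx⟩ := exists_eval_ne_zero (mul_ne_zero ht hc)
  refine ⟨t * p₀, t * q₀, mul_ne_zero ht hq₀, by ring, x, ?_⟩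
  apply linearIndependent_eval_pderiv_of_eval_jacobianMinor_ne_zero (i := i) (j := j)
  rwa [jacobianMinor_mul_mul hti htj]
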